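/- arXiv:2605.17699 — 7 statements merged into one kernel-verified Lean document; each statement's English description precedes it below -/
import Mathlib

section
/- For every integer k ≥ 2 and every integer n with 1 ≤ n ≤ k+1, the n-th k-generalized Pell number equals the Fibonacci number with odd index 2n-1, i.e., P_n^{(k)} = F_{2n-1}. -/
/-!
For `n ≤ k + 1` every term `P (n - i)` with `n ≤ i ≤ k` in the recurrence is an initial zero, so
the first `k + 1` values satisfy the full-history recurrence `P n = 2 P (n-1) + P (n-2) + ⋯ + P 1`.
The odd-indexed Fibonacci numbers satisfy the same recurrence: `F 1 + F 3 + ⋯ + F (2m-1) = F (2m)`,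
hence `F (2m+3) = 2 F (2m+1) + F (2m)`.
-/

open Finset

theorem Nat.sum_range_fib_two_mul_add_one (m : ℕ) :
    ∑ j ∈ range m, fib (2 * j + 1) = fib (2 * m) := by
  induction m with
  | zero => simp
  | succ m ih => rw [sum_range_succ, ih, Nat.mul_succ, fib_add_two]

theorem Nat.fib_two_mul_add_three (m : ℕ) :
    fib (2 * m + 3) = 2 * fib (2 * m + 1) + ∑ j ∈ range m, fib (2 * j + 1) := by
  rw [sum_range_fib_two_mul_add_one, fib_add_two, fib_add_two (n := 2 * m)]
  ring

theorem eq_fib_two_mul_add_one_of_rec (a : ℕ → ℤ) (M : ℕ) (h0 : a 0 = 1)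
    (hrec : ∀ m < M, a (m + 1) = 2 * a m + ∑ j ∈ range m, a j) :
    ∀ m ≤ M, a m = Nat.fib (2 * m + 1) := by
  intro m
  induction m using Nat.strong_induction_on with
  | _ m ih =>
    intro hm
    rcases m with _ | m
    · simp [h0]
    · have hsum : ∑ j ∈ range m, a j = ∑ j ∈ range m, (Nat.fib (2 * j + 1) : ℤ) :=
        sum_congr rfl fun j hj => ih j (by grind) (by grind)
      rw [hrec m (by omega), hsum, ih m (by omega) (by omega),
        show 2 * (m + 1) + 1 = 2 * m + 3 by ring, Nat.fib_two_mul_add_three]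
      push_cast
      ring

theorem sum_Icc_sub_eq_of_eq_zero {M : Type*} [AddCommMonoid M] (f : ℤ → M) {k n : ℤ}
    (hf : ∀ j, 2 - k ≤ j → j ≤ 0 → f j = 0) (hn : 2 ≤ n) (hnk : n ≤ k + 1) :
    ∑ i ∈ Icc 2 k, f (n - i) = ∑ i ∈ Icc 2 (n - 1), f (n - i) := by
  refine (sum_subset (Icc_subset_Icc_right (by omega)) fun i hik hin => hf _ ?_ ?_).symm <;>
    simp only [mem_Icc, not_and, not_le] at hik hin <;> omega

theorem sum_Icc_sub_eq_sum_range {M : Type*} [AddCommMonoid M] (f : ℤ → M) (m : ℕ) :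
    ∑ i ∈ Icc (2 : ℤ) (m + 1), f (m + 2 - i) = ∑ j ∈ range m, f (j + 1) := by
  refine sum_nbij' (fun i => (m + 1 - i).toNat) (fun j => m + 1 - j) ?_ ?_ ?_ ?_ ?_ <;>
    intro x hx <;> simp only [mem_Icc, mem_range] at hx ⊢
  · omega
  · omega
  · omega
  · omega
  · congr 1
    omega

theorem kPell_eq_odd_fib_general
    (k : ℤ) (P : ℤ → ℤ)
    (hinit : ∀ n : ℤ, 2 - k ≤ n → n ≤ 0 → P n = 0)
    (hone : P 1 = 1)
    (hrec : ∀ n : ℤ, 2 ≤ n → P n = 2 * P (n - 1) + ∑ i ∈ Finset.Icc (2:ℤ) k, P (n - i))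
    (n : ℤ) (hn1 : 1 ≤ n) (hnk : n ≤ k + 1) :
    P n = (Nat.fib (2 * n - 1).toNat : ℤ) := by
  obtain ⟨m, rfl⟩ : ∃ m : ℕ, n = m + 1 := ⟨(n - 1).toNat, by omega⟩
  have hfull : ∀ j < m, P ((j + 1 : ℕ) + 1) = 2 * P (j + 1) + ∑ i ∈ range j, P (i + 1) := by
    intro j hj
    rw [hrec _ (by omega), sum_Icc_sub_eq_of_eq_zero P hinit (by omega) (by omega)]
    push_cast
    rw [add_assoc, one_add_one_eq_two, ← sum_Icc_sub_eq_sum_range]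
    congr 3 <;> ring
  rw [show (2 * ((m : ℤ) + 1) - 1).toNat = 2 * m + 1 by omega]
  exact eq_fib_two_mul_add_one_of_rec (fun j => P (j + 1)) m (by simpa using hone) hfull m le_rfl

/-- For `k ≥ 2` and `1 ≤ n ≤ k+1`, `P_n^{(k)} = F_{2n-1}`. -/
theorem kPell_eq_odd_fib
    (k : ℤ) (hk : 2 ≤ k) (P : ℤ → ℤ)
    (hinit : ∀ n : ℤ, 2 - k ≤ n → n ≤ 0 → P n = 0)
    (hone : P 1 = 1)
    (hrec : ∀ n : ℤ, 2 ≤ n → P n = 2 * P (n - 1) + ∑ i ∈ Finset.Icc (2:ℤ) k, P (n - i))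
    (n : ℤ) (hn1 : 1 ≤ n) (hnk : n ≤ k + 1) :
    P n = (Nat.fib (2 * n - 1).toNat : ℤ) :=
  kPell_eq_odd_fib_general k P hinit hone hrec n hn1 hnk
end

section
/- For every integer k ≥ 2, the characteristic polynomial Ψ_k(x) = x^k − 2x^{k-1} − x^{k-2} − ... − x − 1 has exactly one real root α with α > 1, and this root satisfies φ²(1 − φ^{−k}) < α < φ², where φ = (1+√5)/2 is the golden ratio. -/
/-!
Multiplying by `x - 1` telescopes the geometric tail:
`(x - 1) Ψ_k(x) = x^(k-1) (x² - 3x + 1) + 1`. As `φ²` is a root of `x² - 3x + 1`, this gives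
`Ψ_k(φ²) > 0`. At `B = φ² (1 - φ^(-k))` the quadratic factor equals
`-φ^(2-k) (√5 - φ^(2-k))`, and Bernoulli's inequality with `φ^k ≥ k` makes
`B^(k-1) φ^(2-k) ≥ 1`, so `Ψ_k(B) < 0`. The intermediate value theorem gives a root in `(B, φ²)`,
and it is the only positive root because `Ψ_k(x) / x^k = 1 - 2/x - Σ x^(i-k)` is strictly
increasing on `(0, ∞)`.
-/

open Finset Real goldenRatio

noncomputable def kPellPoly (k : ℕ) (x : ℝ) : ℝ :=
  x ^ k - 2 * x ^ (k - 1) - ∑ i ∈ range (k - 1), x ^ i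

lemma sub_one_mul_kPellPoly {k : ℕ} (hk : 1 ≤ k) (x : ℝ) :
    (x - 1) * kPellPoly k x = x ^ (k - 1) * (x ^ 2 - 3 * x + 1) + 1 := by
  obtain ⟨n, rfl⟩ := Nat.exists_eq_add_of_le' hk
  simp only [kPellPoly, Nat.add_sub_cancel]
  linear_combination (-1 : ℝ) * geom_sum_mul x n

lemma continuous_kPellPoly (k : ℕ) : Continuous (kPellPoly k) := by
  unfold kPellPoly
  fun_prop

lemma pow_mul_pow_lt_pow_mul_pow {x y : ℝ} (hx : 0 < x) (hxy : x < y) {i j : ℕ} (hij : i < j) :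
    y ^ i * x ^ j < x ^ i * y ^ j := by
  obtain ⟨d, rfl⟩ := Nat.exists_eq_add_of_lt hij
  have hy : 0 < y := hx.trans hxy
  calc y ^ i * x ^ (i + d + 1) = (x * y) ^ i * x ^ (d + 1) := by ring
    _ < (x * y) ^ i * y ^ (d + 1) := by gcongr
    _ = x ^ i * y ^ (i + d + 1) := by ring

lemma strictMonoOn_kPellPoly_div_pow {k : ℕ} (hk : 1 ≤ k) :
    StrictMonoOn (fun x => kPellPoly k x / x ^ k) (Set.Ioi 0) := by
  intro x hx y hy hxy
  rw [div_lt_div_iff₀ (pow_pos hx k) (pow_pos hy k)]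
  have hlead := pow_mul_pow_lt_pow_mul_pow hx hxy (Nat.sub_lt hk one_pos)
  have hsum : (∑ i ∈ range (k - 1), y ^ i) * x ^ k ≤ (∑ i ∈ range (k - 1), x ^ i) * y ^ k := by
    rw [sum_mul, sum_mul]
    exact sum_le_sum fun i hi =>
      (pow_mul_pow_lt_pow_mul_pow hx hxy (by rw [mem_range] at hi; omega)).le
  simp only [kPellPoly]
  nlinarith

lemma eq_of_kPellPoly_eq_zero {k : ℕ} (hk : 1 ≤ k) {x y : ℝ} (hx : 0 < x) (hy : 0 < y)
    (hx0 : kPellPoly k x = 0) (hy0 : kPellPoly k y = 0) : x = y :=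
  (strictMonoOn_kPellPoly_div_pow hk).injOn hx hy (by simp only [hx0, hy0, zero_div])

lemma natCast_le_pow_of_three_halves_le {p : ℝ} (hp : 3 / 2 ≤ p) (n : ℕ) : (n : ℝ) ≤ p ^ n := by
  rcases lt_or_ge n 2 with hn | hn
  · interval_cases n <;> simp; linarith
  induction n, hn using Nat.le_induction with
  | base => push_cast; nlinarith
  | succ n hn ih =>
    have hn2 : (2 : ℝ) ≤ n := by exact_mod_cast hn
    calc ((n + 1 : ℕ) : ℝ) ≤ 3 / 2 * n := by push_cast; linarith
      _ ≤ p * p ^ n := by gcongr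
      _ = p ^ (n + 1) := by ring

lemma one_le_mul_one_sub_inv_pow {q : ℝ} {n : ℕ} (hq : (n : ℝ) + 1 ≤ q) :
    1 ≤ q * (1 - q⁻¹) ^ n := by
  have hq0 : 0 < q := by linarith [n.cast_nonneg (α := ℝ)]
  have hinv : q⁻¹ ≤ 1 := inv_le_one_of_one_le₀ (by linarith [n.cast_nonneg (α := ℝ)])
  have hbernoulli := one_add_mul_le_pow (a := -q⁻¹) (by linarith) n
  calc 1 ≤ q - n := by linarith
    _ = q * (1 + n * -q⁻¹) := by field_simp; ring
    _ ≤ q * (1 - q⁻¹) ^ n := by rw [← sub_eq_add_neg] at hbernoulli; gcongr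

lemma three_halves_lt_goldenRatio : 3 / 2 < φ := by
  nlinarith [goldenRatio_sq, one_lt_goldenRatio]

lemma kPellPoly_goldenRatio_sq_pos {k : ℕ} (hk : 1 ≤ k) : 0 < kPellPoly k (φ ^ 2) := by
  have h := sub_one_mul_kPellPoly hk (φ ^ 2)
  rw [show (φ ^ 2) ^ 2 - 3 * φ ^ 2 + 1 = 0 by linear_combination (φ ^ 2 + φ - 1) * goldenRatio_sq,
    mul_zero, zero_add] at h
  exact pos_of_mul_pos_right (h ▸ one_pos) (by nlinarith [one_lt_goldenRatio])

lemma one_lt_goldenRatio_sq_mul_one_sub_zpow {k : ℕ} (hk : 2 ≤ k) :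
    1 < φ ^ 2 * (1 - φ ^ (-(k : ℤ))) := by
  have : φ ^ 2 * φ ^ (-(k : ℤ)) ≤ 1 := by
    rw [← zpow_natCast, ← zpow_add₀ goldenRatio_ne_zero]
    exact zpow_le_one_of_nonpos₀ one_lt_goldenRatio.le (by omega)
  nlinarith [goldenRatio_sq, one_lt_goldenRatio]

lemma kPellPoly_goldenRatio_sq_mul_one_sub_zpow_neg {k : ℕ} (hk : 2 ≤ k) :
    kPellPoly k (φ ^ 2 * (1 - φ ^ (-(k : ℤ)))) < 0 := by
  have hB := one_lt_goldenRatio_sq_mul_one_sub_zpow hk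
  have h := sub_one_mul_kPellPoly (by omega : 1 ≤ k) (φ ^ 2 * (1 - φ ^ (-(k : ℤ))))
  obtain ⟨m, rfl⟩ : ∃ m, k = m + 2 := ⟨k - 2, by omega⟩
  rw [zpow_neg, zpow_natCast] at hB h ⊢
  have hk_le_pow := natCast_le_pow_of_three_halves_le three_halves_lt_goldenRatio.le (m + 2)
  have hp1 := one_lt_goldenRatio
  have hp32 := three_halves_lt_goldenRatio
  have hpsq := goldenRatio_sq
  -- `φ` is a reducible abbreviation, which `ring` would unfold into `√5`.
  generalize φ = p at *
  have hq0 : 0 < p ^ (m + 2) := by positivity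
  set u := (p ^ (m + 2))⁻¹
  have hpu : p ^ 2 * u ≤ 1 := by
    rw [mul_inv_le_iff₀ hq0, one_mul]
    exact pow_le_pow_right₀ hp1.le (by omega)
  have hquad : (p ^ 2 * (1 - u)) ^ 2 - 3 * (p ^ 2 * (1 - u)) + 1
      = -(p ^ 2 * u) * (2 * p - 1 - p ^ 2 * u) := by
    linear_combination (p ^ 2 + p - 1 - 2 * p ^ 2 * u) * hpsq
  have hpow : (p ^ 2 * (1 - u)) ^ (m + 1) * (p ^ 2 * u) = p ^ (m + 2) * (1 - u) ^ (m + 1) := by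
    calc _ = p ^ (m + 2) * (p ^ (m + 2) * u) * (1 - u) ^ (m + 1) := by rw [mul_pow]; ring
      _ = _ := by rw [mul_inv_cancel₀ hq0.ne', mul_one]
  have hone_le : 1 ≤ p ^ (m + 2) * (1 - u) ^ (m + 1) :=
    one_le_mul_one_sub_inv_pow (by push_cast at hk_le_pow ⊢; linarith)
  rw [show m + 2 - 1 = m + 1 from rfl, hquad, neg_mul, mul_neg, ← mul_assoc, hpow] at h
  refine neg_of_mul_neg_right (a := p ^ 2 * (1 - u) - 1) ?_ (by linarith)
  rw [h]
  nlinarith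

/-- For every integer `k ≥ 2`, the polynomial
`Ψ_k(x) = x^k − 2x^{k-1} − x^{k-2} − ⋯ − x − 1` has exactly one real root `α > 1`,
and this root satisfies `φ²(1 − φ^{−k}) < α < φ²` where `φ = (1+√5)/2`. -/
theorem kPell_dominant_root_location (k : ℕ) (hk : 2 ≤ k) :
    (∃! α : ℝ, 1 < α ∧
      α ^ k - 2 * α ^ (k - 1) - ∑ i ∈ Finset.range (k - 1), α ^ i = 0) ∧
    ∀ α : ℝ, 1 < α →
      α ^ k - 2 * α ^ (k - 1) - ∑ i ∈ Finset.range (k - 1), α ^ i = 0 →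
      ((1 + Real.sqrt 5) / 2) ^ 2 * (1 - ((1 + Real.sqrt 5) / 2) ^ (-(k : ℤ))) < α ∧
        α < ((1 + Real.sqrt 5) / 2) ^ 2 := by
  change (∃! α : ℝ, 1 < α ∧ kPellPoly k α = 0) ∧ ∀ α : ℝ, 1 < α → kPellPoly k α = 0 →
    φ ^ 2 * (1 - φ ^ (-(k : ℤ))) < α ∧ α < φ ^ 2
  have hk1 : 1 ≤ k := by omega
  have hB1 := one_lt_goldenRatio_sq_mul_one_sub_zpow hk
  have hBφ : φ ^ 2 * (1 - φ ^ (-(k : ℤ))) < φ ^ 2 :=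
    mul_lt_of_lt_one_right (by positivity) (sub_lt_self _ (zpow_pos goldenRatio_pos _))
  obtain ⟨α, hαI, hα⟩ := intermediate_value_Ioo hBφ.le (continuous_kPellPoly k).continuousOn
    ⟨kPellPoly_goldenRatio_sq_mul_one_sub_zpow_neg hk, kPellPoly_goldenRatio_sq_pos hk1⟩
  have hα1 : 1 < α := hB1.trans hαI.1
  have hunique : ∀ β : ℝ, 1 < β → kPellPoly k β = 0 → β = α := fun β hβ hβ0 =>
    eq_of_kPellPoly_eq_zero hk1 (by linarith) (by linarith) hβ0 hα
  refine ⟨⟨α, ⟨hα1, hα⟩, fun β hβ => hunique β hβ.1 hβ.2⟩, fun β hβ hβ0 => ?_⟩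
  rw [hunique β hβ hβ0]
  exact hαI
end

section
/- For every integer k ≥ 2 and every integer n ≥ 1, the n-th k-generalized Pell number satisfies α^{n-2} ≤ P_n^{(k)} ≤ α^{n-1}, where α is the unique root of Ψ_k(x) = x^k − 2x^{k-1} − ... − x − 1 with α > 1. -/
/-!
The recurrence is monotone in the previous `k` values, and both `n ↦ P n` and `n ↦ α ^ n`
satisfy it, so an inequality between two shifts of them on a window of `k` consecutive indices
propagates to all later indices. For the upper bound the window is `2 - k, …, 1`, where `P`
vanishes except for `P 1 = 1`. For the lower bound it is `1, …, k`: subtracting consecutive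
instances of the recurrence gives `P (n + 1) = 3 P n - P (n - 1)` there (the term `P (n - k)` is
an initial zero), and the same subtraction for `α ^ n` gives `α + α⁻¹ < 3`; together they make
`P n - α⁻¹ P (n - 1)` grow at least by the factor `α` at each step.
-/

open Finset

noncomputable def kPellStep (k : ℤ) (a : ℤ → ℝ) (n : ℤ) : ℝ :=
  2 * a (n - 1) + ∑ i ∈ Icc (2 : ℤ) k, a (n - i)

theorem sum_Icc_two_eq_sum_range {M : Type*} [AddCommMonoid M] (K : ℕ) (f : ℤ → M) :
    ∑ i ∈ Icc (2 : ℤ) K, f i = ∑ j ∈ range (K - 1), f (K - j) := by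
  refine sum_nbij' (fun i => (K - i).toNat) (fun j => K - j) ?_ ?_ ?_ ?_ ?_ <;>
    intro x hx <;> simp only [mem_Icc, mem_range] at hx ⊢
  all_goals first | omega | (congr 1; omega)

theorem kPellStep_mono {k : ℤ} (hk : 1 ≤ k) {a b : ℤ → ℝ} {n : ℤ}
    (h : ∀ m, n - k ≤ m → m < n → a m ≤ b m) :
    kPellStep k a n ≤ kPellStep k b n := by
  unfold kPellStep
  gcongr with i hi
  · exact h _ (by omega) (by omega)
  · rw [mem_Icc] at hi
    exact h _ (by omega) (by omega)

theorem three_mul_eq_of_kPellStep {k : ℤ} (hk : 1 ≤ k) {a : ℤ → ℝ} {n : ℤ}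
    (hn : a n = kPellStep k a n) (hn' : a (n - 1) = kPellStep k a (n - 1)) :
    3 * a (n - 1) = a n + a (n - 2) + a (n - 1 - k) := by
  obtain ⟨m, rfl⟩ : ∃ m : ℕ, k = (m + 1 : ℕ) := ⟨(k - 1).toNat, by omega⟩
  have shift := sum_range_succ_comm (fun j => a (n - 2 - m + j)) m
  rw [sum_range_succ'] at shift
  simp only [kPellStep, sum_Icc_two_eq_sum_range, add_tsub_cancel_right] at hn hn'
  push_cast at hn hn' shift ⊢
  simp only [show ∀ x : ℤ, n - (m + 1 - x) = n - 2 - m + (x + 1) by intro; ring,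
    show ∀ x : ℤ, n - 1 - (m + 1 - x) = n - 2 - m + x by intro; ring] at hn hn'
  rw [show n - 2 - m + m = n - 2 by ring, add_zero] at shift
  rw [show n - 1 - 1 = n - 2 by ring] at hn'
  rw [show n - 1 - (m + 1) = n - 2 - m by ring]
  linarith

theorem le_of_kPellStep {k : ℤ} (hk : 1 ≤ k) {a b : ℤ → ℝ} {n₀ : ℤ}
    (hinit : ∀ n, n₀ - k < n → n ≤ n₀ → a n ≤ b n)
    (ha : ∀ n, n₀ < n → a n ≤ kPellStep k a n)
    (hb : ∀ n, n₀ < n → kPellStep k b n ≤ b n) :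
    ∀ n, n₀ - k < n → a n ≤ b n := by
  suffices h : ∀ N, n₀ ≤ N → ∀ n, n₀ - k < n → n ≤ N → a n ≤ b n from
    fun n hn => h (max n₀ n) (le_max_left _ _) n hn (le_max_right _ _)
  intro N hN
  induction N, hN using Int.leInduction with
  | base => exact hinit
  | succ N hN ih =>
    intro n hn hnN
    rcases hnN.lt_or_eq with hlt | rfl
    · exact ih n hn (by omega)
    · calc a (N + 1) ≤ kPellStep k a (N + 1) := ha _ (by omega)
        _ ≤ kPellStep k b (N + 1) := kPellStep_mono hk fun m hm hm' => ih m (by omega) (by omega)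
        _ ≤ b (N + 1) := hb _ (by omega)

theorem kPellStep_zpow {k : ℤ} (hk : 1 ≤ k) {α : ℝ} (hα : α ≠ 0)
    (hroot : α ^ k.toNat - 2 * α ^ (k.toNat - 1) - ∑ i ∈ range (k.toNat - 1), α ^ i = 0)
    (n : ℤ) : kPellStep k (α ^ ·) n = α ^ n := by
  obtain ⟨K, rfl⟩ : ∃ K : ℕ, k = K := ⟨k.toNat, by omega⟩
  rw [Int.toNat_natCast] at hroot
  have hK : α ^ K = 2 * α ^ (K - 1) + ∑ j ∈ range (K - 1), α ^ j := by linarith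
  have hmul : ∀ j : ℕ, α ^ (n - K) * α ^ j = α ^ (n - K + j) := fun j => by
    rw [← zpow_natCast, ← zpow_add₀ hα]
  have hexp : ∀ j : ℕ, n - (K - j) = n - K + j := fun j => by ring
  calc kPellStep K (α ^ ·) n
      = α ^ (n - K) * (2 * α ^ (K - 1) + ∑ j ∈ range (K - 1), α ^ j) := by
        rw [kPellStep, sum_Icc_two_eq_sum_range, mul_add, mul_sum, mul_left_comm, hmul,
          show n - K + (K - 1 : ℕ) = n - 1 by omega]
        simp only [hmul, hexp]
    _ = α ^ n := by rw [← hK, hmul, sub_add_cancel]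

theorem kPellStep_zpow_sub {k : ℤ} {α : ℝ} (hsol : ∀ n, kPellStep k (α ^ ·) n = α ^ n)
    (d n : ℤ) : kPellStep k (fun m => α ^ (m - d)) n = α ^ (n - d) := by
  rw [← hsol (n - d)]
  simp only [kPellStep, sub_right_comm _ d]

theorem add_inv_lt_three {k : ℤ} (hk : 1 ≤ k) {α : ℝ} (hα : 0 < α)
    (hsol : ∀ n, kPellStep k (α ^ ·) n = α ^ n) : α + α⁻¹ < 3 := by
  have h := three_mul_eq_of_kPellStep hk (hsol 1).symm (hsol (1 - 1)).symm
  norm_num at h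
  have : 0 < (α ^ k)⁻¹ := by positivity
  linarith

structure IsKPell (k : ℤ) (p : ℤ → ℝ) : Prop where
  eq_zero : ∀ n, 2 - k ≤ n → n ≤ 0 → p n = 0
  one : p 1 = 1
  eq_kPellStep : ∀ n, 2 ≤ n → p n = kPellStep k p n

namespace IsKPell

variable {k : ℤ} {p : ℤ → ℝ} {α : ℝ}

theorem two (hP : IsKPell k p) : p 2 = 2 := by
  rw [hP.eq_kPellStep 2 le_rfl, kPellStep, sum_eq_zero fun i hi => hP.eq_zero _ ?_ ?_]
  · norm_num [hP.one]
  all_goals rw [mem_Icc] at hi; omega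

theorem nonneg (hk : 1 ≤ k) (hP : IsKPell k p) (n : ℤ) (hn : 2 - k ≤ n) : 0 ≤ p n := by
  refine le_of_kPellStep hk (a := 0) (n₀ := 1) (fun m hm hm1 => ?_) (fun _ _ => by simp [kPellStep])
    (fun m hm => (hP.eq_kPellStep m (by omega)).ge) n (by omega)
  rcases hm1.lt_or_eq with hm1 | rfl
  · exact (hP.eq_zero m (by omega) (by omega)).ge
  · simp [hP.one]

theorem le_zpow (hk : 1 ≤ k) (hP : IsKPell k p) (hα : 0 < α)
    (hsol : ∀ n, kPellStep k (α ^ ·) n = α ^ n) (n : ℤ) (hn : 2 - k ≤ n) :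
    p n ≤ α ^ (n - 1) := by
  refine le_of_kPellStep hk (b := fun m => α ^ (m - 1)) (n₀ := 1) (fun m hm hm1 => ?_)
    (fun m hm => (hP.eq_kPellStep m (by omega)).le) (fun m _ => (kPellStep_zpow_sub hsol 1 m).le)
    n (by omega)
  rcases hm1.lt_or_eq with hm1 | rfl
  · rw [hP.eq_zero m (by omega) (by omega)]
    positivity
  · simp [hP.one]

theorem zpow_le_sub_inv_mul (hk : 1 ≤ k) (hP : IsKPell k p) (hα : 1 ≤ α)
    (hα3 : α + α⁻¹ ≤ 3) :
    ∀ n, 2 ≤ n → n ≤ k + 1 → α ^ (n - 2) ≤ p n - α⁻¹ * p (n - 1) := by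
  intro n hn
  induction n, hn using Int.leInduction with
  | base =>
    intro _
    have : α⁻¹ ≤ 1 := inv_le_one_of_one_le₀ hα
    norm_num [hP.two, hP.one]
    linarith
  | succ n hn ih =>
    intro hnk
    have h3 := three_mul_eq_of_kPellStep hk (hP.eq_kPellStep (n + 1) (by omega))
      (hP.eq_kPellStep (n + 1 - 1) (by omega))
    rw [hP.eq_zero (n + 1 - 1 - k) (by omega) (by omega), add_sub_cancel_right,
      show n + 1 - 2 = n - 1 by ring] at h3
    have hpn : 0 ≤ p n := hP.nonneg hk n (by omega)
    have hα0 : 0 < α := by linarith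
    calc α ^ (n + 1 - 2) = α * α ^ (n - 2) := by
          rw [show n + 1 - 2 = n - 2 + 1 by ring, zpow_add_one₀ hα0.ne', mul_comm]
      _ ≤ α * (p n - α⁻¹ * p (n - 1)) := by gcongr; exact ih (by omega)
      _ = α * p n - p (n - 1) := by field_simp
      _ ≤ p (n + 1) - α⁻¹ * p (n + 1 - 1) := by
          rw [add_sub_cancel_right]; nlinarith

theorem zpow_le_of_le_add_one (hk : 1 ≤ k) (hP : IsKPell k p) (hα : 1 ≤ α)
    (hα3 : α + α⁻¹ ≤ 3) (n : ℤ) (hn : 1 ≤ n) (hnk : n ≤ k + 1) : α ^ (n - 2) ≤ p n := by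
  rcases hn.lt_or_eq with hn | rfl
  · have h := hP.zpow_le_sub_inv_mul hk hα hα3 n (by omega) hnk
    have : 0 ≤ α⁻¹ * p (n - 1) := mul_nonneg (by positivity) (hP.nonneg hk _ (by omega))
    linarith
  · norm_num [hP.one]
    exact inv_le_one_of_one_le₀ hα

theorem zpow_le (hk : 1 ≤ k) (hP : IsKPell k p) (hα : 1 < α)
    (hsol : ∀ n, kPellStep k (α ^ ·) n = α ^ n) (n : ℤ) (hn : 1 ≤ n) : α ^ (n - 2) ≤ p n := by
  have hα3 := add_inv_lt_three hk (by linarith) hsol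
  exact le_of_kPellStep hk (a := fun m => α ^ (m - 2)) (n₀ := k)
    (fun m hm hmk => hP.zpow_le_of_le_add_one hk hα.le hα3.le m (by omega) (by omega))
    (fun m _ => (kPellStep_zpow_sub hsol 2 m).ge) (fun m hm => (hP.eq_kPellStep m (by omega)).ge)
    n (by omega)

end IsKPell

/-- For `k ≥ 2` and `n ≥ 1`, `α^{n-2} ≤ P_n^{(k)} ≤ α^{n-1}` where `α` is
the unique real root of `Ψ_k` greater than `1`. -/
theorem kPell_growth
    (k : ℤ) (hk : 2 ≤ k) (P : ℤ → ℤ)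
    (hinit : ∀ n : ℤ, 2 - k ≤ n → n ≤ 0 → P n = 0)
    (hone : P 1 = 1)
    (hrec : ∀ n : ℤ, 2 ≤ n → P n = 2 * P (n - 1) + ∑ i ∈ Finset.Icc (2:ℤ) k, P (n - i))
    (α : ℝ) (hα : 1 < α)
    (hroot : α ^ k.toNat - 2 * α ^ (k.toNat - 1)
      - ∑ i ∈ Finset.range (k.toNat - 1), α ^ i = 0)
    (n : ℤ) (hn : 1 ≤ n) :
    α ^ (n - 2) ≤ (P n : ℝ) ∧ (P n : ℝ) ≤ α ^ (n - 1) := by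
  have hP : IsKPell k (fun m => (P m : ℝ)) :=
    ⟨fun m h0 h1 => by simp [hinit m h0 h1], by simp [hone],
      fun m hm => by simp [kPellStep, hrec m hm]⟩
  have hsol := kPellStep_zpow (by omega) (by positivity) hroot
  exact ⟨hP.zpow_le (by omega) hα hsol n hn,
    hP.le_zpow (by omega) (by positivity) hsol n (by omega)⟩
end

section
/- For every integer k ≥ 2, if α is the dominant root of Ψ_k(x) = x^k − 2x^{k-1} − ... − x − 1 (the unique real root with α > 1), then 0.276 < g_k(α) < 0.5, where g_k(z) = (z−1)/((k+1)z² − 3kz + k − 1). -/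
/-!
Write `P = α ^ (k-1)` and `q = α² - 3α + 1`. Multiplying the root equation by `α - 1` and summing
the geometric series gives `P q = -1`, so `q < 0` (hence `α < (3 + √5)/2`) and `α > 2`.
The denominator of `g_k(α)` is `k q + α² - 1 = α² - 1 - k / P`, and `k ≤ 2 ^ (k-1) < P`, so it
lies strictly between `2 (α - 1)` and `α² - 1`; thus `1 / (α + 1) < g_k(α) < 1 / 2`.
-/

theorem pow_mul_quadratic_eq_neg_one {R : Type*} [CommRing R] {α : R} {n : ℕ}
    (h : α ^ (n + 1) - 2 * α ^ n - ∑ i ∈ Finset.range n, α ^ i = 0) :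
    α ^ n * (α ^ 2 - 3 * α + 1) = -1 := by
  have hgeom : (∑ i ∈ Finset.range n, α ^ i) * (α - 1) = α ^ n - 1 := geom_sum_mul α n
  linear_combination (α - 1) * h + hgeom

theorem two_lt_of_pow_mul_quadratic_eq_neg_one {α : ℝ} {n : ℕ} (hn : n ≠ 0) (hα : 1 < α)
    (h : α ^ n * (α ^ 2 - 3 * α + 1) = -1) : 2 < α := by
  have hP : 1 < α ^ n := one_lt_pow₀ hα hn
  -- `α ^ n (α - 1) (α - 2) = α ^ n - 1 > 0`
  by_contra! h2
  nlinarith [mul_nonneg (mul_nonneg (by linarith : (0 : ℝ) ≤ α ^ n) (by linarith : 0 ≤ α - 1))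
    (by linarith : 0 ≤ 2 - α)]

theorem natCast_add_one_le_pow {α : ℝ} (hα : 2 ≤ α) (n : ℕ) : (n : ℝ) + 1 ≤ α ^ n := by
  have h := one_add_mul_le_pow (by linarith : (-2 : ℝ) ≤ α - 1) n
  rw [add_sub_cancel] at h
  nlinarith [(Nat.cast_nonneg n : (0 : ℝ) ≤ n)]

theorem g_bounds_of_quadratic_neg {α κ : ℝ} (hα : 1 < α) (hκ : 0 ≤ κ)
    (hq : α ^ 2 - 3 * α + 1 < 0) (hκq : κ * -(α ^ 2 - 3 * α + 1) < (α - 1) ^ 2) :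
    0.276 < (α - 1) / ((κ + 1) * α ^ 2 - 3 * κ * α + κ - 1) ∧
      (α - 1) / ((κ + 1) * α ^ 2 - 3 * κ * α + κ - 1) < 0.5 := by
  have hD : (κ + 1) * α ^ 2 - 3 * κ * α + κ - 1 = κ * (α ^ 2 - 3 * α + 1) + (α ^ 2 - 1) := by ring
  have hD_gt : 2 * (α - 1) < κ * (α ^ 2 - 3 * α + 1) + (α ^ 2 - 1) := by nlinarith
  have hD_lt : κ * (α ^ 2 - 3 * α + 1) + (α ^ 2 - 1) ≤ α ^ 2 - 1 := by nlinarith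
  have hD_pos : 0 < κ * (α ^ 2 - 3 * α + 1) + (α ^ 2 - 1) := by linarith
  have hα_lt : α < 181 / 69 := by nlinarith
  rw [hD]
  constructor
  · rw [lt_div_iff₀ hD_pos]
    nlinarith
  · rw [div_lt_iff₀ hD_pos]
    linarith

/-- For `k ≥ 2`, if `α` is the dominant root of `Ψ_k` then
`0.276 < g_k(α) < 0.5` where `g_k(z) = (z−1)/((k+1)z² − 3kz + k − 1)`. -/
theorem kPell_g_bounds (k : ℕ) (hk : 2 ≤ k) (α : ℝ) (hα : 1 < α)
    (hroot : α ^ k - 2 * α ^ (k - 1) - ∑ i ∈ Finset.range (k - 1), α ^ i = 0) :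
    0.276 < (α - 1) / ((k + 1) * α ^ 2 - 3 * k * α + k - 1) ∧
      (α - 1) / ((k + 1) * α ^ 2 - 3 * k * α + k - 1) < 0.5 := by
  obtain ⟨n, rfl⟩ : ∃ n, k = n + 1 := ⟨k - 1, by omega⟩
  rw [Nat.add_sub_cancel] at hroot
  have hPq := pow_mul_quadratic_eq_neg_one hroot
  have hα2 : 2 < α := two_lt_of_pow_mul_quadratic_eq_neg_one (by omega) hα hPq
  have hP : 0 < α ^ n := by positivity
  have hq : α ^ 2 - 3 * α + 1 < 0 := by nlinarith
  have hκP : ((n + 1 : ℕ) : ℝ) ≤ α ^ n := by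
    push_cast
    exact natCast_add_one_le_pow hα2.le n
  refine g_bounds_of_quadratic_neg hα (Nat.cast_nonneg _) hq ?_
  calc ((n + 1 : ℕ) : ℝ) * -(α ^ 2 - 3 * α + 1) ≤ α ^ n * -(α ^ 2 - 3 * α + 1) :=
        mul_le_mul_of_nonneg_right hκP (by linarith)
    _ = 1 := by linarith
    _ < (α - 1) ^ 2 := by nlinarith
end

section
/- For every integer k ≥ 2 and every integer n ≥ 2−k, |P_n^{(k)} − g_k(α)·α^n| < 1/2, where α is the dominant root of Ψ_k and g_k(z) = (z−1)/((k+1)z² − 3kz + k − 1). -/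
/-!
Write `k = L + 1` and `δ = 3α - α² - 1`. Multiplying `Ψ_k(α) = 0` by `α - 1` gives `δ α^L = 1`,
whence `2 < α < 3` and `k δ < 1`.

The error `E m = P m - g_k(α) α^m` satisfies the Pell recurrence, hence also the four-term
recurrence `E m = 3 E (m-1) - E (m-2) - E (m-1-k)` with characteristic polynomial `(x - 1) Ψ_k(x)`.
That relation says exactly that the defect `E m - (3 - α) E (m-1) - δ ∑_{t<L} α^t E (m-2-t)`
is multiplied by `α` at each step, and `g_k(α)` is the coefficient for which it vanishes at
`m = 2`. So for `m ≥ 2`, `E m` is a convex combination of its `k` predecessors (the weights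
`3 - α` and `δ α^t` sum to `1`), and the bound `|E m| < 1/2` propagates from the initial
values `2 - k ≤ m ≤ 1`, where it is checked directly.
-/

open Finset

theorem Convex.mem_of_recurrence {V : Type*} [AddCommGroup V] [Module ℝ V] {s : Set V}
    (hs : Convex ℝ s) {E : ℤ → V} {w : ℕ → ℝ} {n : ℕ} {a b : ℤ}
    (hw₀ : ∀ j ∈ range n, 0 ≤ w j) (hw₁ : ∑ j ∈ range n, w j = 1) (hab : a + n ≤ b)
    (hrec : ∀ m, b ≤ m → E m = ∑ j ∈ range n, w j • E (m - 1 - j))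
    (hinit : ∀ m, a ≤ m → m < b → E m ∈ s) (m : ℤ) (hm : a ≤ m) : E m ∈ s := by
  suffices h : ∀ N : ℕ, ∀ m, a ≤ m → m < a + N → E m ∈ s from
    h _ m hm (by omega : m < a + ((m - a).toNat + 1 : ℕ))
  intro N
  induction N with
  | zero => intro m h₁ h₂; omega
  | succ N ih =>
    intro m ham hmN
    rcases lt_or_ge m (a + N) with hlt | hge
    · exact ih m ham hlt
    rcases lt_or_ge m b with hmb | hbm
    · exact hinit m ham hmb
    rw [hrec m hbm]
    refine hs.sum_mem hw₀ hw₁ fun j hj => ih _ ?_ ?_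
    · have := mem_range.1 hj; omega
    · have := mem_range.1 hj; push_cast at hmN; omega

section CommRing

variable {R : Type*} [CommRing R] (L : ℕ)

def pellChar (x : R) : R := x ^ (L + 1) - 2 * x ^ L - ∑ i ∈ range L, x ^ i

def pellDelta (α : R) : R := 3 * α - α ^ 2 - 1

def pellWeight (α : R) : ℕ → R
  | 0 => 3 - α
  | t + 1 => pellDelta α * α ^ t

def PellStep (u : ℤ → R) (m : ℤ) : Prop :=
  u m = 2 * u (m - 1) + ∑ t ∈ range L, u (m - 2 - t)

def pellDefect (α : R) (u : ℤ → R) (m : ℤ) : R :=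
  u m - ∑ j ∈ range (L + 1), pellWeight α j * u (m - 1 - j)

variable {L}

theorem pellDelta_mul_pow {α : R} (hroot : pellChar L α = 0) : pellDelta α * α ^ L = 1 := by
  unfold pellChar at hroot
  unfold pellDelta
  linear_combination (1 - α) * hroot - geom_sum_mul α L

theorem pellStep_of_sum_Icc {u : ℤ → R} {m : ℤ}
    (h : u m = 2 * u (m - 1) + ∑ i ∈ Icc (2 : ℤ) (L + 1), u (m - i)) : PellStep L u m := by
  rw [Int.Icc_eq_finset_map, sum_map, show ((L : ℤ) + 1 + 1 - 2).toNat = L by omega] at h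
  simpa only [PellStep, Function.Embedding.trans_apply, Nat.castEmbedding_apply,
    addLeftEmbedding_apply, sub_add_eq_sub_sub] using h

theorem PellStep.sub_mul {u v : ℤ → R} {m : ℤ} (hu : PellStep L u m) (hv : PellStep L v m)
    (c : R) : PellStep L (fun i => u i - c * v i) m := by
  unfold PellStep at *
  rw [sum_sub_distrib, ← mul_sum]
  linear_combination hu - c * hv

theorem PellStep.four_term {u : ℤ → R} {m : ℤ} (h : PellStep L u m) (h' : PellStep L u (m - 1)) :
    u m = 3 * u (m - 1) - u (m - 2) - u (m - 2 - L) := by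
  have htel := sum_range_sub' (fun t : ℕ => u (m - 2 - t)) L
  unfold PellStep at h h'
  have e : ∀ t : ℕ, m - 1 - 2 - (t : ℤ) = m - 2 - ((t + 1 : ℕ) : ℤ) := fun t => by push_cast; ring
  simp only [e, Nat.cast_zero, sub_zero, sum_sub_distrib] at h' htel
  rw [show m - 1 - 1 = m - 2 by ring] at h'
  linear_combination h - h' + htel

theorem pellDefect_sub_mul (α : R) (u v : ℤ → R) (c : R) (m : ℤ) :
    pellDefect L α (fun i => u i - c * v i) m = pellDefect L α u m - c * pellDefect L α v m := by
  simp only [pellDefect, mul_sub, sum_sub_distrib, mul_sum, mul_left_comm c]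
  ring

theorem pellDefect_succ {α : R} (hroot : pellChar L α = 0) {u : ℤ → R} {m : ℤ}
    (h : PellStep L u (m + 1)) (h' : PellStep L u m) :
    pellDefect L α u (m + 1) = α * pellDefect L α u m := by
  have h4 := h.four_term (by simpa using h')
  rw [add_sub_cancel_right, show m + 1 - 2 = m - 1 by ring] at h4
  have htel := sum_range_sub' (fun t : ℕ => α ^ t * u (m - 1 - t)) L
  have hshift : ∑ t ∈ range L, α ^ (t + 1) * u (m - 1 - (t + 1 : ℕ))
      = α * ∑ t ∈ range L, α ^ t * u (m - 1 - 1 - t) := by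
    rw [mul_sum]
    refine sum_congr rfl fun t _ => ?_
    rw [pow_succ, show m - 1 - ((t + 1 : ℕ) : ℤ) = m - 1 - 1 - t by push_cast; ring]
    ring
  rw [sum_sub_distrib, hshift] at htel
  have e : ∀ t : ℕ, m + 1 - 1 - ((t + 1 : ℕ) : ℤ) = m - 1 - t := fun t => by push_cast; ring
  have e' : ∀ t : ℕ, m - 1 - ((t + 1 : ℕ) : ℤ) = m - 1 - 1 - t := fun t => by push_cast; ring
  simp only [pellDefect, sum_range_succ', pellWeight, e, e', mul_assoc, ← mul_sum] at htel ⊢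
  simp only [Nat.cast_zero, sub_zero, pow_zero, one_mul, add_sub_cancel_right] at htel ⊢
  have hδ := pellDelta_mul_pow hroot
  unfold pellDelta at hδ ⊢
  linear_combination h4 - (3 * α - α ^ 2 - 1) * htel + u (m - 1 - L) * hδ

theorem pellDefect_eq_zero {α : R} (hroot : pellChar L α = 0) {u : ℤ → R}
    (hstep : ∀ m, 2 ≤ m → PellStep L u m) (h2 : pellDefect L α u 2 = 0) :
    ∀ m, 2 ≤ m → pellDefect L α u m = 0 :=
  Int.leInduction h2 fun m hm ih => by
    rw [pellDefect_succ hroot (hstep _ (by omega)) (hstep m hm), ih, mul_zero]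

theorem pellDefect_two {u : ℤ → R} (α : R) (h2 : PellStep L u 2) (h1 : u 1 = 1)
    (h0 : ∀ t < L, u (-t) = 0) : pellDefect L α u 2 = α - 1 := by
  have hz : ∀ t ∈ range L, u (2 - 2 - t) = 0 := fun t ht => by
    simpa using h0 t (mem_range.1 ht)
  have hz' : ∀ t ∈ range L, pellWeight α (t + 1) * u (2 - 1 - (t + 1 : ℕ)) = 0 := fun t ht => by
    rw [show (2 : ℤ) - 1 - (t + 1 : ℕ) = -t by push_cast; ring, h0 t (mem_range.1 ht), mul_zero]
  unfold PellStep at h2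
  rw [sum_eq_zero hz, show (2 : ℤ) - 1 = 1 by norm_num, h1] at h2
  rw [pellDefect, sum_range_succ', sum_eq_zero hz', h2]
  norm_num [pellWeight, h1]
  ring

end CommRing

section Field

variable {K : Type*} [Field K] {L : ℕ} {α : K}

theorem pellStep_zpow (hα : α ≠ 0) (hroot : pellChar L α = 0) (m : ℤ) :
    PellStep L (fun i => α ^ i) m := by
  have hsum : ∑ t ∈ range L, α ^ (m - 2 - t) = α ^ (m - 1 - L) * ∑ i ∈ range L, α ^ i := by
    rw [mul_sum, ← sum_range_reflect]
    refine sum_congr rfl fun t ht => ?_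
    have := mem_range.1 ht
    rw [← zpow_natCast, ← zpow_add₀ hα]
    congr 1
    omega
  have hpow : ∀ j : ℕ, α ^ (m - 1 - L) * α ^ j = α ^ (m - 1 - L + j) := fun j => by
    rw [zpow_add₀ hα, zpow_natCast]
  have h₁ := hpow (L + 1)
  have h₀ := hpow L
  push_cast at h₁ h₀
  rw [show m - 1 - L + (L + 1) = m by ring] at h₁
  rw [show m - 1 - L + L = m - 1 by ring] at h₀
  unfold PellStep
  unfold pellChar at hroot
  rw [hsum]
  linear_combination α ^ (m - 1 - L) * hroot - h₁ + 2 * h₀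

theorem pellDefect_zpow_two (hα : α ≠ 0) :
    pellDefect L α (fun i => α ^ i) 2 =
      ((L + 1 : K) + 1) * α ^ 2 - 3 * (L + 1) * α + (L + 1) - 1 := by
  have hw : ∀ t ∈ range L, pellWeight α (t + 1) * α ^ ((2 : ℤ) - 1 - (t + 1 : ℕ))
      = pellDelta α := fun t _ => by
    rw [show (2 : ℤ) - 1 - (t + 1 : ℕ) = -t by push_cast; ring, pellWeight, zpow_neg, zpow_natCast,
      mul_assoc, mul_inv_cancel₀ (pow_ne_zero _ hα), mul_one]
  rw [pellDefect, sum_range_succ', sum_congr rfl hw, sum_const, card_range, nsmul_eq_mul]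
  norm_num [pellWeight, pellDelta]
  ring

theorem sum_pellWeight (hα : α ≠ 1) (hroot : pellChar L α = 0) :
    ∑ j ∈ range (L + 1), pellWeight α j = 1 := by
  have hδ := pellDelta_mul_pow hroot
  apply mul_right_cancel₀ (sub_ne_zero.2 hα)
  simp only [sum_range_succ', pellWeight, ← mul_sum]
  unfold pellDelta at hδ ⊢
  linear_combination (3 * α - α ^ 2 - 1) * geom_sum_mul α L + hδ

end Field

section Real

variable {L : ℕ} {α : ℝ}

theorem two_lt_of_pellChar_eq_zero (hL : L ≠ 0) (hα : 0 < α) (hroot : pellChar L α = 0) :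
    2 < α := by
  have hsum : 0 < ∑ i ∈ range L, α ^ i :=
    sum_pos (fun i _ => pow_pos hα i) (nonempty_range_iff.2 hL)
  have h : α ^ L * (α - 2) = ∑ i ∈ range L, α ^ i := by
    unfold pellChar at hroot
    linear_combination hroot
  exact sub_pos.1 (pos_of_mul_pos_right (h ▸ hsum) (pow_nonneg hα.le L))

theorem pellDelta_pos (hα : 0 < α) (hroot : pellChar L α = 0) : 0 < pellDelta α :=
  pos_of_mul_pos_left ((pellDelta_mul_pow hroot).symm ▸ one_pos) (pow_nonneg hα.le L)

theorem pellWeight_nonneg (hα : 0 < α) (hroot : pellChar L α = 0) (j : ℕ) :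
    0 ≤ pellWeight α j := by
  have hδ := pellDelta_pos hα hroot
  cases j with
  | zero => unfold pellDelta at hδ; simp only [pellWeight]; nlinarith
  | succ t => exact mul_nonneg hδ.le (pow_nonneg hα.le t)

theorem succ_mul_pellDelta_lt_one (hL : L ≠ 0) (hα : 0 < α) (hroot : pellChar L α = 0) :
    (L + 1) * pellDelta α < 1 := by
  have hL2 : (L + 1 : ℝ) ≤ 2 ^ L := by exact_mod_cast Nat.lt_two_pow_self
  have h2α : (2 : ℝ) ^ L < α ^ L :=
    pow_lt_pow_left₀ (two_lt_of_pellChar_eq_zero hL hα hroot) zero_le_two hL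
  calc (L + 1) * pellDelta α < α ^ L * pellDelta α :=
        mul_lt_mul_of_pos_right (hL2.trans_lt h2α) (pellDelta_pos hα hroot)
    _ = 1 := by rw [mul_comm, pellDelta_mul_pow hroot]

end Real

noncomputable def pellCoeff (c α : ℝ) : ℝ := (α - 1) / ((c + 1) * α ^ 2 - 3 * c * α + c - 1)

section PellCoeff

variable {c α : ℝ} (hα : 2 < α) (hc₁ : c * pellDelta α < 1)
include hα hc₁

theorem pellCoeff_denom_pos : 0 < (c + 1) * α ^ 2 - 3 * c * α + c - 1 := by
  unfold pellDelta at hc₁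
  nlinarith

theorem pellCoeff_pos : 0 < pellCoeff c α :=
  div_pos (by linarith) (pellCoeff_denom_pos hα hc₁)

theorem pellCoeff_lt_half : pellCoeff c α < 1 / 2 := by
  rw [pellCoeff, div_lt_iff₀ (pellCoeff_denom_pos hα hc₁)]
  unfold pellDelta at hc₁
  nlinarith

theorem abs_one_sub_pellCoeff_mul_lt_half (hc₀ : 0 ≤ c * pellDelta α) :
    |1 - pellCoeff c α * α| < 1 / 2 := by
  have hd := pellCoeff_denom_pos hα hc₁
  unfold pellDelta at hc₀ hc₁
  have hupper : pellCoeff c α * α < 3 / 2 := by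
    rw [pellCoeff, div_mul_eq_mul_div, div_lt_iff₀ hd]
    nlinarith
  have hlower : 1 / 2 < pellCoeff c α * α := by
    rw [pellCoeff, div_mul_eq_mul_div, lt_div_iff₀ hd]
    nlinarith
  rw [abs_lt]
  constructor <;> linarith

end PellCoeff

theorem pellDefect_sub_pellCoeff_two {L : ℕ} {α : ℝ} (hα : α ≠ 0)
    (hden : ((L + 1 : ℝ) + 1) * α ^ 2 - 3 * (L + 1) * α + (L + 1) - 1 ≠ 0)
    {u : ℤ → ℝ} (h2 : PellStep L u 2) (h1 : u 1 = 1) (h0 : ∀ t < L, u (-t) = 0) :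
    pellDefect L α (fun m => u m - pellCoeff (L + 1) α * α ^ m) 2 = 0 := by
  rw [pellDefect_sub_mul, pellDefect_two α h2 h1 h0, pellDefect_zpow_two hα, pellCoeff,
    div_mul_cancel₀ _ hden, sub_self]

theorem abs_sub_pellCoeff_mul_zpow_lt_half {L : ℕ} (hL : L ≠ 0) {α : ℝ} (hα : 1 < α)
    (hroot : pellChar L α = 0) {u : ℤ → ℝ} (hstep : ∀ m, 2 ≤ m → PellStep L u m)
    (h1 : u 1 = 1) (h0 : ∀ m, 1 - (L : ℤ) ≤ m → m ≤ 0 → u m = 0) {m : ℤ} (hm : 1 - (L : ℤ) ≤ m) :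
    |u m - pellCoeff (L + 1) α * α ^ m| < 1 / 2 := by
  have hα₀ : 0 < α := by linarith
  have h2α := two_lt_of_pellChar_eq_zero hL hα₀ hroot
  have hcδ := succ_mul_pellDelta_lt_one hL hα₀ hroot
  have hcδ₀ : 0 ≤ ((L : ℝ) + 1) * pellDelta α :=
    mul_nonneg (by positivity) (pellDelta_pos hα₀ hroot).le
  set g := pellCoeff (L + 1) α
  set E : ℤ → ℝ := fun m => u m - g * α ^ m
  have hdefect : ∀ m, 2 ≤ m → pellDefect L α E m = 0 :=
    pellDefect_eq_zero hroot (fun m hm => (hstep m hm).sub_mul (pellStep_zpow hα₀.ne' hroot m) g)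
      (pellDefect_sub_pellCoeff_two hα₀.ne' (pellCoeff_denom_pos h2α hcδ).ne' (hstep 2 le_rfl) h1
        fun t ht => h0 _ (by omega) (by omega))
  have hbase : ∀ m, 1 - (L : ℤ) ≤ m → m < 2 → E m ∈ Set.Ioo (-(1 / 2)) (1 / 2) := by
    intro m hm₁ hm₂
    rw [Set.mem_Ioo, ← abs_lt]
    rcases (show m ≤ 0 ∨ m = 1 by omega) with hm₀ | rfl
    · have hg := pellCoeff_pos h2α hcδ
      show |u m - g * α ^ m| < 1 / 2
      rw [h0 m hm₁ hm₀, zero_sub, abs_neg, abs_of_pos (by positivity)]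
      calc g * α ^ m ≤ g := mul_le_of_le_one_right hg.le (zpow_le_one_of_nonpos₀ hα.le hm₀)
        _ < 1 / 2 := pellCoeff_lt_half h2α hcδ
    · show |u 1 - g * α ^ (1 : ℤ)| < 1 / 2
      simpa [h1] using abs_one_sub_pellCoeff_mul_lt_half h2α hcδ hcδ₀
  exact abs_lt.2 <| (convex_Ioo _ _).mem_of_recurrence (fun j _ => pellWeight_nonneg hα₀ hroot j)
    (sum_pellWeight hα.ne' hroot) (by push_cast; omega)
    (fun m hm => (sub_eq_zero.1 (hdefect m hm)).trans (by simp only [smul_eq_mul])) hbase m hm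

/-- For `k ≥ 2` and `n ≥ 2−k`, `|P_n^{(k)} − g_k(α)·α^n| < 1/2`. -/
theorem kPell_dominant_approx
    (k : ℤ) (hk : 2 ≤ k) (P : ℤ → ℤ)
    (hinit : ∀ n : ℤ, 2 - k ≤ n → n ≤ 0 → P n = 0)
    (hone : P 1 = 1)
    (hrec : ∀ n : ℤ, 2 ≤ n → P n = 2 * P (n - 1) + ∑ i ∈ Finset.Icc (2:ℤ) k, P (n - i))
    (α : ℝ) (hα : 1 < α)
    (hroot : α ^ k.toNat - 2 * α ^ (k.toNat - 1)
      - ∑ i ∈ Finset.range (k.toNat - 1), α ^ i = 0)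
    (n : ℤ) (hn : 2 - k ≤ n) :
    |(P n : ℝ) - (α - 1) / ((k + 1) * α ^ 2 - 3 * k * α + k - 1) * α ^ n| < 1 / 2 := by
  obtain ⟨L, rfl⟩ : ∃ L : ℕ, k = L + 1 := ⟨(k - 1).toNat, by omega⟩
  rw [show ((L : ℤ) + 1).toNat = L + 1 by omega, Nat.add_sub_cancel] at hroot
  have hstep : ∀ m, 2 ≤ m → PellStep L (fun i => (P i : ℝ)) m := fun m hm =>
    pellStep_of_sum_Icc (by exact_mod_cast hrec m hm)
  push_cast
  exact abs_sub_pellCoeff_mul_zpow_lt_half (by omega) hα hroot hstep (by exact_mod_cast hone)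
    (fun m hm₁ hm₀ => by rw [hinit m (by omega) hm₀, Int.cast_zero]) (by omega)
end

section
/- For every integer k ≥ 2, the k-generalized Pell sequence satisfies the Binet formula P_n^{(k)} = Σ_{i=1}^{k} g_k(α_i) α_i^n, where α_1, ..., α_k are the (complex) roots of Ψ_k(x) = x^k − 2x^{k-1} − ... − x − 1 and g_k(z) = (z−1)/((k+1)z² − 3kz + k − 1). -/
/-!
Since the `α i` are `k` distinct roots of the monic degree-`k` polynomial `Ψ_k`, we have
`Ψ_k = ∏ (X - α i)`, and Lagrange interpolation of `X ^ m` (`m < k`) at the roots gives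
`∑ α_i ^ m / Ψ_k'(α_i) = [m = k - 1]`. Multiplying by `X - 1` telescopes `Ψ_k` to
`X^(k+1) - 3 X^k + X^(k-1) + 1`; differentiating this at a root `α` gives
`(α - 1) Ψ_k'(α) = α^(k-2) ((k+1) α² - 3kα + k - 1)`, i.e. `g_k(α_i) = α_i^(k-2) / Ψ_k'(α_i)`.
So the Binet sum is `∑ α_i^(n+k-2) / Ψ_k'(α_i)`, which is `0` for `2 - k ≤ n ≤ 0` and `1` for
`n = 1`; it satisfies the Pell recurrence because each `α_i ^ n` does, hence it equals `P n`.
-/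

open Polynomial Finset

namespace KPell

noncomputable def psi (K : ℕ) (R : Type*) [CommRing R] : R[X] :=
  X ^ K - 2 * X ^ (K - 1) - ∑ j ∈ range (K - 1), X ^ j

section CommRing

variable {R : Type*} [CommRing R]

@[simp]
lemma eval_psi (K : ℕ) (x : R) :
    (psi K R).eval x = x ^ K - 2 * x ^ (K - 1) - ∑ j ∈ range (K - 1), x ^ j := by
  simp [psi, eval_finsetSum]

lemma degree_psi_tail_lt [Nontrivial R] {K : ℕ} (hK : 1 ≤ K) :
    (2 * X ^ (K - 1) + ∑ j ∈ range (K - 1), X ^ j : R[X]).degree < K := by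
  refine (degree_le_of_natDegree_le (n := K - 1) ?_).trans_lt
    (by exact_mod_cast (by omega : K - 1 < K))
  refine natDegree_add_le_of_degree_le (natDegree_mul_le.trans (by simp))
    (natDegree_sum_le_of_forall_le _ _ fun j hj => ?_)
  simpa using (mem_range.1 hj).le.trans (by omega)

lemma monic_psi [Nontrivial R] {K : ℕ} (hK : 1 ≤ K) : (psi K R).Monic := by
  rw [psi, sub_sub]
  exact monic_X_pow_sub (degree_psi_tail_lt hK)

lemma degree_psi [Nontrivial R] {K : ℕ} (hK : 1 ≤ K) : (psi K R).degree = K := by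
  have h := degree_psi_tail_lt (R := R) hK
  rw [psi, sub_sub, degree_sub_eq_left_of_degree_lt (by rwa [degree_X_pow]), degree_X_pow]

lemma eval_psi_zero {K : ℕ} (hK : 2 ≤ K) : (psi K R).eval 0 = -1 := by
  obtain ⟨m, rfl⟩ : ∃ m, K = m + 2 := ⟨K - 2, by omega⟩
  simp [sum_range_succ']

lemma eval_psi_one {K : ℕ} (hK : 1 ≤ K) : (psi K R).eval 1 = -K := by
  obtain ⟨m, rfl⟩ : ∃ m, K = m + 1 := ⟨K - 1, by omega⟩
  simp only [eval_psi, one_pow, mul_one, sum_const, card_range, nsmul_eq_mul, Nat.add_sub_cancel]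
  push_cast
  ring

lemma ne_zero_of_isRoot_psi [Nontrivial R] {K : ℕ} (hK : 2 ≤ K) {x : R}
    (hx : (psi K R).IsRoot x) : x ≠ 0 := by
  rintro rfl
  simpa [eval_psi_zero hK] using hx.eq_zero

lemma ne_one_of_isRoot_psi [CharZero R] {K : ℕ} (hK : 1 ≤ K) {x : R}
    (hx : (psi K R).IsRoot x) : x ≠ 1 := by
  rintro rfl
  have h := hx.eq_zero
  rw [eval_psi_one hK, neg_eq_zero, Nat.cast_eq_zero] at h
  omega

lemma X_sub_one_mul_psi (K : ℕ) :
    (X - 1) * psi (K + 1) R = X ^ (K + 2) - 3 * X ^ (K + 1) + X ^ K + 1 := by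
  have hgeom := geom_sum_mul (X : R[X]) K
  simp only [psi, Nat.add_sub_cancel]
  linear_combination -hgeom

lemma sub_one_mul_eval_derivative_psi {K : ℕ} {x : R} (hx : (psi (K + 2) R).IsRoot x) :
    (x - 1) * (derivative (psi (K + 2) R)).eval x
      = x ^ K * ((K + 3) * x ^ 2 - 3 * (K + 2) * x + (K + 1)) := by
  have h := congrArg (fun p => (derivative p).eval x) (X_sub_one_mul_psi (R := R) (K + 1))
  simp only [derivative_mul, derivative_sub, derivative_add, derivative_X, derivative_one,
    derivative_X_pow, derivative_ofNat] at h
  simp only [sub_zero, one_mul, eval_add, hx.eq_zero, eval_mul, eval_sub, eval_X, eval_one,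
    zero_add, Nat.cast_add, Nat.cast_one, Nat.cast_ofNat, map_add, map_natCast, map_one,
    Nat.add_one_sub_one, zero_mul, add_tsub_cancel_right, add_zero, eval_natCast, eval_C, eval_pow,
    eval_ofNat] at h
  linear_combination h

end CommRing

section Field

variable {F : Type*} [Field F] {ι : Type*} [Fintype ι] {v : ι → F}

lemma psi_eq_nodal {K : ℕ} (hK : 1 ≤ K) (hcard : Fintype.card ι = K)
    (hv : Function.Injective v) (hroot : ∀ i, (psi K F).IsRoot (v i)) :
    psi K F = Lagrange.nodal univ v := by
  refine eq_of_degree_le_of_eval_index_eq (s := univ) hv.injOn ?_ ?_ ?_ ?_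
  · rw [degree_psi hK, card_univ, hcard]
  · rw [degree_psi hK, Lagrange.degree_nodal, card_univ, hcard]
  · rw [(monic_psi hK).leadingCoeff, Lagrange.nodal_monic.leadingCoeff]
  · intro i _
    rw [(hroot i).eq_zero, Lagrange.eval_nodal_at_node (mem_univ i)]

variable [DecidableEq ι]

lemma sub_one_div_eq_pow_mul_inv_eval_derivative_psi [CharZero F] {K : ℕ} (hK : 2 ≤ K) {x : F}
    (hx : (psi K F).IsRoot x) (hd : (derivative (psi K F)).eval x ≠ 0) :
    (x - 1) / ((K + 1) * x ^ 2 - 3 * K * x + K - 1)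
      = x ^ (K - 2) * ((derivative (psi K F)).eval x)⁻¹ := by
  have hx₁ : x - 1 ≠ 0 := sub_ne_zero.2 (ne_one_of_isRoot_psi (by omega) hx)
  obtain ⟨m, rfl⟩ : ∃ m, K = m + 2 := ⟨K - 2, by omega⟩
  have hkey := sub_one_mul_eval_derivative_psi hx
  have hD : ((m + 2 : ℕ) + 1) * x ^ 2 - 3 * (m + 2 : ℕ) * x + (m + 2 : ℕ) - 1 ≠ 0 := by
    intro hD
    refine mul_ne_zero hx₁ hd ?_
    rw [hkey]
    push_cast at hD ⊢
    linear_combination x ^ m * hD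
  rw [div_eq_iff hD, Nat.add_sub_cancel, mul_assoc, ← div_eq_inv_mul, ← mul_div_assoc,
    eq_div_iff hd]
  push_cast
  linear_combination hkey

lemma sub_one_div_eq_pow_mul_nodalWeight [CharZero F] {K : ℕ} (hK : 2 ≤ K)
    (hcard : Fintype.card ι = K) (hv : Function.Injective v)
    (hroot : ∀ i, (psi K F).IsRoot (v i)) (i : ι) :
    (v i - 1) / ((K + 1) * v i ^ 2 - 3 * K * v i + K - 1)
      = v i ^ (K - 2) * Lagrange.nodalWeight univ v i := by
  have hw := Lagrange.nodalWeight_ne_zero hv.injOn (mem_univ i)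
  rw [Lagrange.nodalWeight_eq_eval_derivative_nodal (mem_univ i),
    ← psi_eq_nodal (by omega) hcard hv hroot] at hw ⊢
  exact sub_one_div_eq_pow_mul_inv_eval_derivative_psi hK (hroot i) (inv_eq_zero.not.1 hw)

lemma sum_nodalWeight_mul_zpow (hv : Function.Injective v) {n : ℤ} (hn₀ : 0 ≤ n)
    (hn : n < Fintype.card ι) :
    ∑ i, Lagrange.nodalWeight univ v i * v i ^ n = if n = Fintype.card ι - 1 then 1 else 0 := by
  lift n to ℕ using hn₀
  have h := Lagrange.coeff_eq_sum (s := univ) hv.injOn (P := X ^ n)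
    (by rw [degree_X_pow, card_univ]; exact_mod_cast hn)
  simp only [coeff_X_pow, eval_X_pow, card_univ] at h
  simp only [zpow_natCast, Lagrange.nodalWeight, prod_inv_distrib, ← div_eq_inv_mul, ← h]
  exact if_congr (by omega) rfl rfl

lemma sum_pow_mul_nodalWeight_mul_zpow {K : ℕ} (hK : 2 ≤ K) (hcard : Fintype.card ι = K)
    (hv : Function.Injective v) (hv₀ : ∀ i, v i ≠ 0) {m : ℤ} (hm₀ : 2 - K ≤ m) (hm₁ : m ≤ 1) :
    ∑ i, v i ^ (K - 2) * Lagrange.nodalWeight univ v i * v i ^ m = if m = 1 then 1 else 0 := by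
  have hshift : ∀ i, v i ^ (K - 2) * Lagrange.nodalWeight univ v i * v i ^ m
      = Lagrange.nodalWeight univ v i * v i ^ (m + (K - 2 : ℕ)) := fun i => by
    rw [zpow_add₀ (hv₀ i), zpow_natCast]
    ring
  rw [sum_congr rfl fun i _ => hshift i, sum_nodalWeight_mul_zpow hv (by omega) (by omega)]
  exact if_congr (by omega) rfl rfl

end Field

section Recurrence

variable {R : Type*} [CommSemiring R]

def KPellRecAt (k : ℤ) (u : ℤ → R) (n : ℤ) : Prop :=
  u n = 2 * u (n - 1) + ∑ i ∈ Icc 2 k, u (n - i)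

lemma kPellRecAt_sum_mul {ι : Type*} (s : Finset ι) (c : ι → R) {u : ι → ℤ → R} {k n : ℤ}
    (hu : ∀ i ∈ s, KPellRecAt k (u i) n) : KPellRecAt k (fun m => ∑ i ∈ s, c i * u i m) n := by
  unfold KPellRecAt at hu ⊢
  rw [mul_sum, sum_comm, ← sum_add_distrib]
  refine sum_congr rfl fun i hi => ?_
  rw [hu i hi, mul_add, mul_left_comm, mul_sum]

lemma eq_of_kPellRecAt {k : ℤ} (hk : 1 ≤ k) {u v : ℤ → R} (hu : ∀ n, 2 ≤ n → KPellRecAt k u n)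
    (hv : ∀ n, 2 ≤ n → KPellRecAt k v n) (hbase : ∀ n, 2 - k ≤ n → n ≤ 1 → u n = v n) :
    ∀ n, 2 - k ≤ n → u n = v n := by
  intro n
  induction n using Int.strongRec (m := 2 - k) with
  | lt n hn => exact fun h => absurd h (not_le.2 hn)
  | ge n hn ih =>
    intro _
    rcases le_or_gt n 1 with h1 | h1
    · exact hbase n hn h1
    rw [hu n h1, hv n h1, ih (n - 1) (by omega) (by omega)]
    congr 1
    refine sum_congr rfl fun i hi => ?_
    rw [mem_Icc] at hi
    exact ih (n - i) (by omega) (by omega)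

end Recurrence

lemma kPellRecAt_zpow {F : Type*} [Field F] {K : ℕ} (hK : 1 ≤ K) {x : F} (hx₀ : x ≠ 0)
    (hx : (psi K F).IsRoot x) (n : ℤ) : KPellRecAt K (fun m => x ^ m) n := by
  have hsum : ∑ j ∈ range (K - 1), x ^ j = x ^ (K : ℤ) - 2 * x ^ ((K : ℤ) - 1) := by
    have h := hx.eq_zero
    rw [eval_psi] at h
    rw [zpow_natCast, show (K : ℤ) - 1 = (K - 1 : ℕ) by omega, zpow_natCast]
    linear_combination -h
  have hshift : ∀ j : ℤ, x ^ (n - j) = x ^ (n - K) * x ^ (K - j) := fun j => by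
    rw [← zpow_add₀ hx₀]
    ring_nf
  have hreindex : ∑ i ∈ Icc (2 : ℤ) K, x ^ (n - i) = ∑ j ∈ range (K - 1), x ^ (n - K) * x ^ j := by
    refine sum_nbij' (fun i => (K - i).toNat) (fun j => K - j) ?_ ?_ ?_ ?_ fun i hi => ?_
    iterate 4 (intro j hj; simp only [mem_Icc, mem_range] at hj ⊢; omega)
    rw [mem_Icc] at hi
    rw [hshift i, ← zpow_natCast, Int.toNat_of_nonneg (by omega)]
  have h₀ := hshift 0
  have h₁ := hshift 1
  rw [sub_zero, sub_zero] at h₀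
  unfold KPellRecAt
  rw [hreindex, ← mul_sum, hsum]
  linear_combination h₀ - 2 * h₁

end KPell

open KPell in
/-- Binet formula: `P_n^{(k)} = Σ_{i=1}^{k} g_k(α_i) α_i^n`, where
`α_1, …, α_k` are the `k` distinct complex roots of `Ψ_k`. -/
theorem kPell_binet
    (k : ℤ) (hk : 2 ≤ k) (P : ℤ → ℤ)
    (hinit : ∀ n : ℤ, 2 - k ≤ n → n ≤ 0 → P n = 0)
    (hone : P 1 = 1)
    (hrec : ∀ n : ℤ, 2 ≤ n → P n = 2 * P (n - 1) + ∑ i ∈ Finset.Icc (2:ℤ) k, P (n - i))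
    (α : Fin k.toNat → ℂ) (hdist : Function.Injective α)
    (hroots : ∀ i, (α i) ^ k.toNat - 2 * (α i) ^ (k.toNat - 1)
      - ∑ j ∈ Finset.range (k.toNat - 1), (α i) ^ j = 0)
    (n : ℤ) (hn : 2 - k ≤ n) :
    (P n : ℂ) = ∑ i, (α i - 1) / ((k + 1) * (α i) ^ 2 - 3 * k * (α i) + k - 1)
      * (α i) ^ n := by
  have hkK : (k.toNat : ℤ) = k := Int.toNat_of_nonneg (by omega)
  have hK : 2 ≤ k.toNat := by omega
  have hroot : ∀ i, (psi k.toNat ℂ).IsRoot (α i) := fun i => (eval_psi _ _).trans (hroots i)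
  have hα₀ : ∀ i, α i ≠ 0 := fun i => ne_zero_of_isRoot_psi hK (hroot i)
  have hkC : (k : ℂ) = (k.toNat : ℂ) := by exact_mod_cast hkK.symm
  simp_rw [hkC, sub_one_div_eq_pow_mul_nodalWeight hK (Fintype.card_fin _) hdist hroot]
  refine eq_of_kPellRecAt (u := fun n => (P n : ℂ))
    (v := fun n => ∑ i, α i ^ (k.toNat - 2) * Lagrange.nodalWeight univ α i * α i ^ n) (by omega)
    (fun m hm => ?_) (fun m hm => ?_) (fun m hm₀ hm₁ => ?_) n hn
  · simp only [KPellRecAt]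
    exact_mod_cast hrec m hm
  · have h := kPellRecAt_sum_mul univ (fun i => α i ^ (k.toNat - 2) * Lagrange.nodalWeight univ α i)
      fun i _ => kPellRecAt_zpow (by omega) (hα₀ i) (hroot i) m
    rwa [hkK] at h
  · rw [sum_pow_mul_nodalWeight_mul_zpow hK (Fintype.card_fin _) hdist hα₀ (by omega) hm₁]
    rcases lt_or_eq_of_le hm₁ with hm | rfl
    · rw [hinit m hm₀ (by omega), if_neg hm.ne, Int.cast_zero]
    · rw [hone, if_pos rfl, Int.cast_one]
end

section
/- Let (P_n) be the classical Pell sequence (P_0 = 0, P_1 = 1, P_n = 2P_{n-1} + P_{n-2}). Then for all integers n > m ≥ 2 with n ≥ 3, there are no positive integers x, y with P_n^x = P_m^y; i.e., distinct Pell numbers with indices at least 2 are multiplicatively independent. -/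
/-!
Write `n = d k` with `d = gcd n m`. Pell numbers form a strong divisibility sequence, so a relation
`P n ^ x = P m ^ y` forces every prime factor of `P n` to divide `gcd (P n) (P m) = P d`. For such
primes the lifting-the-exponent formula `v_p (P (d k)) = v_p (P d) + v_p k` holds, hence
`P (d k) ∣ k P d`. This contradicts the growth `P (d k) ≥ 2 ^ (d (k - 1)) P d > k P d`.
-/

open Zsqrtd

def pell : ℕ → ℕ
  | 0 => 0
  | 1 => 1
  | n + 2 => 2 * pell (n + 1) + pell n

theorem pell_add_two (n : ℕ) : pell (n + 2) = 2 * pell (n + 1) + pell n := rfl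

theorem eq_pell {P : ℕ → ℕ} (h0 : P 0 = 0) (h1 : P 1 = 1)
    (hrec : ∀ n, P (n + 2) = 2 * P (n + 1) + P n) : P = pell := by
  funext n
  induction n using Nat.twoStepInduction with
  | zero => exact h0
  | one => exact h1
  | more n ih₁ ih₂ => rw [hrec, pell_add_two, ih₁, ih₂]

theorem two_pow_mul_pell_le (n t : ℕ) : 2 ^ t * pell (n + 1) ≤ pell (n + 1 + t) := by
  induction t with
  | zero => simp
  | succ t ih =>
    have h := pell_add_two (n + t)
    rw [show n + t + 1 = n + 1 + t by omega] at h
    rw [show n + 1 + (t + 1) = n + t + 2 by omega, h, pow_succ]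
    linarith

theorem pell_pos {n : ℕ} (hn : n ≠ 0) : 0 < pell n := by
  obtain ⟨n, rfl⟩ := Nat.exists_eq_succ_of_ne_zero hn
  have h := two_pow_mul_pell_le 0 n
  rw [show pell (0 + 1) = 1 from rfl, mul_one, zero_add, add_comm] at h
  exact (Nat.two_pow_pos n).trans_le h

theorem pell_add (m n : ℕ) :
    pell (m + n + 1) = pell (m + 1) * pell (n + 1) + pell m * pell n := by
  induction n using Nat.twoStepInduction with
  | zero => simp [pell]
  | one => simp [pell]; ring
  | more n ih₁ ih₂ =>
    rw [show m + (n + 2) + 1 = m + n + 1 + 2 by omega, pell_add_two,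
      show m + n + 1 + 1 = m + (n + 1) + 1 by omega, ih₂, ih₁,
      show n + 2 + 1 = n + 1 + 2 by omega, pell_add_two (n + 1), pell_add_two n]
    ring

theorem pell_coprime_pell_succ (n : ℕ) : Nat.Coprime (pell n) (pell (n + 1)) := by
  induction n with
  | zero => simp [pell]
  | succ n ih => rw [pell_add_two, Nat.coprime_mul_right_add_right]; exact ih.symm

theorem gcd_pell_add_self (m n : ℕ) :
    Nat.gcd (pell m) (pell (n + m)) = Nat.gcd (pell m) (pell n) := by
  rcases n with _ | n
  · simp [pell]
  calc Nat.gcd (pell m) (pell (n + 1 + m))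
      = Nat.gcd (pell m) (pell n * pell m + pell (n + 1) * pell (m + 1)) := by
        rw [show n + 1 + m = n + m + 1 by omega, pell_add]; ring_nf
    _ = Nat.gcd (pell m) (pell (n + 1) * pell (m + 1)) := by
        rw [add_comm, Nat.gcd_add_mul_right_right]
    _ = Nat.gcd (pell m) (pell (n + 1)) :=
        (pell_coprime_pell_succ m).symm.gcd_mul_right_cancel_right _

theorem gcd_pell_add_mul_self (m n k : ℕ) :
    Nat.gcd (pell m) (pell (n + k * m)) = Nat.gcd (pell m) (pell n) := by
  induction k with
  | zero => simp
  | succ k ih => rw [← ih, add_mul, one_mul, ← add_assoc, gcd_pell_add_self]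

theorem pell_gcd (m n : ℕ) : pell (Nat.gcd m n) = Nat.gcd (pell m) (pell n) := by
  induction m, n using Nat.gcd.induction with
  | H0 => simp [pell]
  | H1 m n _ h =>
    rw [← Nat.gcd_rec m n] at h
    conv_rhs => rw [← Nat.mod_add_div' n m]
    rwa [gcd_pell_add_mul_self m (n % m) (n / m), Nat.gcd_comm (pell m)]

theorem isStrongDvdSequence_pell : Nat.IsStrongDvdSequence pell :=
  fun m n ↦ (pell_gcd m n).symm

theorem Zsqrtd.isCoprime_re_im_of_isUnit {d : ℤ} {z : ℤ√d} (hz : IsUnit z) :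
    IsCoprime z.re z.im := by
  obtain ⟨v, hv⟩ := ((isUnit_iff_norm_isUnit z).mp hz).exists_left_inv
  exact ⟨v * z.re, -(v * d * z.im), by rw [norm_def] at hv; linear_combination hv⟩

theorem Zsqrtd.exists_pow_succ_re_im {d : ℤ} (z : ℤ√d) (k : ℕ) :
    ∃ s w : ℤ, (z ^ (k + 1)).re = z.re ^ (k + 1) + z.im ^ 2 * s ∧
      (z ^ (k + 1)).im = (k + 1) * z.re ^ k * z.im + z.im ^ 3 * w := by
  induction k with
  | zero => exact ⟨0, 0, by simp, by simp⟩
  | succ k ih =>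
    obtain ⟨s, w, hre, him⟩ := ih
    refine ⟨z.re * s + d * ((k + 1) * z.re ^ k + z.im ^ 2 * w), z.re * w + s, ?_, ?_⟩
    · rw [pow_succ, re_mul, hre, him]; ring
    · rw [pow_succ, im_mul, hre, him]; push_cast; ring

def silverRatio : ℤ√2 := ⟨1, 1⟩

theorem silverRatio_pow_succ (n : ℕ) :
    silverRatio ^ (n + 1) = ⟨pell (n + 1) + pell n, pell (n + 1)⟩ := by
  induction n with
  | zero => rfl
  | succ n ih =>
    rw [pow_succ, ih, pell_add_two]
    ext <;> simp [silverRatio] <;> ring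

theorem im_silverRatio_pow (n : ℕ) : (silverRatio ^ n).im = pell n := by
  rcases n with _ | n
  · rfl
  · rw [silverRatio_pow_succ]

theorem isUnit_silverRatio : IsUnit silverRatio :=
  .of_mul_eq_one ⟨-1, 1⟩ rfl

theorem padicValInt_add_of_pow_dvd {p : ℕ} [Fact p.Prime] {y z : ℤ} (hy : y ≠ 0)
    (hz : (p : ℤ) ^ (padicValInt p y + 1) ∣ z) : padicValInt p (y + z) = padicValInt p y := by
  have hdvd : (p : ℤ) ^ padicValInt p y ∣ y + z :=
    dvd_add (padicValInt_dvd y) ((pow_dvd_pow _ (Nat.le_succ _)).trans hz)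
  have hndvd : ¬ (p : ℤ) ^ (padicValInt p y + 1) ∣ y + z := by
    rw [dvd_add_left hz, padicValInt_dvd_iff]
    omega
  rw [padicValInt_dvd_iff] at hdvd hndvd
  omega

/-- Writing `(1 + √2) ^ j = u + pell j • √2`, the `√2`-coordinate of `(1 + √2) ^ (j k)` is
`k u ^ (k - 1) pell j` modulo `pell j ^ 3`, and `u` is prime to `pell j` because `1 + √2` is a
unit. -/
theorem padicValNat_pell_mul_of_lt {p : ℕ} [hp : Fact p.Prime] {j k : ℕ} (hj : j ≠ 0)
    (hk : k ≠ 0) (hpj : p ∣ pell j) (hlt : padicValNat p k < 2 * padicValNat p (pell j)) :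
    padicValNat p (pell (j * k)) = padicValNat p (pell j) + padicValNat p k := by
  obtain ⟨k, rfl⟩ := Nat.exists_eq_add_one_of_ne_zero hk
  obtain ⟨-, w, -, hw⟩ := (silverRatio ^ j).exists_pow_succ_re_im k
  set u := (silverRatio ^ j).re
  rw [← pow_mul, im_silverRatio_pow, im_silverRatio_pow] at hw
  have hu : ¬ (p : ℤ) ∣ u := fun hdvd ↦ Nat.prime_iff_prime_int.mp hp.out |>.not_isUnit <|
    (isCoprime_re_im_of_isUnit (isUnit_silverRatio.pow j)).isUnit_of_dvd' hdvd
      (by rw [im_silverRatio_pow]; exact_mod_cast hpj)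
  have hj0 : (pell j : ℤ) ≠ 0 := by exact_mod_cast (pell_pos hj).ne'
  have hu0 : u ^ k ≠ 0 := pow_ne_zero _ fun h ↦ hu (h ▸ dvd_zero _)
  have hval : padicValInt p ((k + 1) * u ^ k * pell j) =
      padicValNat p (k + 1) + padicValNat p (pell j) := by
    rw [padicValInt.mul (by positivity) hj0, padicValInt.mul (by positivity) hu0,
      padicValInt.eq_zero_of_not_dvd (fun h ↦ hu (Int.Prime.dvd_pow' hp.out h)), add_zero,
      ← Nat.cast_succ, padicValInt.of_nat, padicValInt.of_nat]
  have hpow : (p : ℤ) ^ (padicValNat p (pell j) * 3) ∣ (pell j : ℤ) ^ 3 := by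
    rw [pow_mul]
    refine pow_dvd_pow_of_dvd ?_ 3
    simpa [padicValInt.of_nat] using padicValInt_dvd (p := p) (pell j : ℤ)
  have hz : (p : ℤ) ^ (padicValInt p ((k + 1) * u ^ k * pell j) + 1) ∣ (pell j : ℤ) ^ 3 * w :=
    ((pow_dvd_pow _ (by rw [hval]; omega)).trans hpow).mul_right w
  rw [← padicValInt.of_nat, hw,
    padicValInt_add_of_pow_dvd (mul_ne_zero (mul_ne_zero (by positivity) hu0) hj0) hz, hval,
    add_comm]

theorem dvd_pell_mul {p j : ℕ} (hpj : p ∣ pell j) (k : ℕ) : p ∣ pell (j * k) :=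
  hpj.trans (isStrongDvdSequence_pell.isDvdSequence _ _ (dvd_mul_right j k))

theorem padicValNat_pell_mul_prime_pow {p : ℕ} [hp : Fact p.Prime] {j : ℕ} (hj : j ≠ 0)
    (hpj : p ∣ pell j) (e : ℕ) :
    padicValNat p (pell (j * p ^ e)) = padicValNat p (pell j) + e := by
  induction e with
  | zero => simp
  | succ e ih =>
    have hje : j * p ^ e ≠ 0 := mul_ne_zero hj (pow_ne_zero _ hp.out.ne_zero)
    have hpos := one_le_padicValNat_of_dvd (pell_pos hje).ne' (dvd_pell_mul hpj (p ^ e))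
    rw [pow_succ, ← mul_assoc, padicValNat_pell_mul_of_lt hje hp.out.ne_zero
      (dvd_pell_mul hpj _) (by rw [padicValNat_self]; omega), ih, padicValNat_self, add_assoc]

theorem padicValNat_pell_mul {p : ℕ} [hp : Fact p.Prime] {j k : ℕ} (hj : j ≠ 0) (hk : k ≠ 0)
    (hpj : p ∣ pell j) :
    padicValNat p (pell (j * k)) = padicValNat p (pell j) + padicValNat p k := by
  obtain ⟨e, r, hpr, rfl⟩ := Nat.exists_eq_pow_mul_and_not_dvd hk p hp.out.ne_one
  have hr : r ≠ 0 := right_ne_zero_of_mul hk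
  have hje : j * p ^ e ≠ 0 := mul_ne_zero hj (pow_ne_zero _ hp.out.ne_zero)
  have hvr : padicValNat p r = 0 := padicValNat.eq_zero_of_not_dvd hpr
  have hpos := one_le_padicValNat_of_dvd (pell_pos hje).ne' (dvd_pell_mul hpj (p ^ e))
  rw [← mul_assoc, padicValNat_pell_mul_of_lt hje hr (dvd_pell_mul hpj _) (by omega),
    padicValNat_pell_mul_prime_pow hj hpj, padicValNat.mul (pow_ne_zero _ hp.out.ne_zero) hr,
    padicValNat.prime_pow, hvr, add_zero, add_zero]

theorem pell_mul_lt_pell_mul {d k : ℕ} (hd : d ≠ 0) (hk : 2 ≤ k) (hdk : 3 ≤ d * k) :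
    pell d * k < pell (d * k) := by
  obtain ⟨d, rfl⟩ := Nat.exists_eq_add_one_of_ne_zero hd
  obtain ⟨c, rfl⟩ := Nat.exists_eq_add_one_of_ne_zero (by omega : k ≠ 0)
  rw [mul_add_one] at hdk ⊢
  have hct : c ≤ (d + 1) * c := Nat.le_mul_of_pos_left c d.succ_pos
  have hdt : d + 1 ≤ (d + 1) * c := Nat.le_mul_of_pos_right _ (by omega)
  have hlt : c + 1 < 2 ^ ((d + 1) * c) := by
    obtain ⟨s, hs⟩ : ∃ s, (d + 1) * c = s + 2 := ⟨(d + 1) * c - 2, by omega⟩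
    have := s.lt_two_pow_self
    rw [hs, pow_add]
    omega
  calc pell (d + 1) * (c + 1) < pell (d + 1) * 2 ^ ((d + 1) * c) :=
        Nat.mul_lt_mul_of_pos_left hlt (pell_pos hd)
    _ ≤ pell ((d + 1) * c + (d + 1)) := by
        rw [mul_comm (pell _), add_comm ((d + 1) * c)]
        exact two_pow_mul_pell_le d _

theorem pell_mul_dvd_of_forall_prime_dvd {d k : ℕ} (hd : d ≠ 0) (hk : k ≠ 0)
    (h : ∀ p, p.Prime → p ∣ pell (d * k) → p ∣ pell d) : pell (d * k) ∣ pell d * k := by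
  have hdk := (pell_pos (mul_ne_zero hd hk)).ne'
  have hd' := (pell_pos hd).ne'
  rw [← Nat.factorization_prime_le_iff_dvd hdk (mul_ne_zero hd' hk)]
  intro p hp
  have := Fact.mk hp
  rw [Nat.factorization_def _ hp, Nat.factorization_def _ hp, padicValNat.mul hd' hk]
  by_cases hpd : p ∣ pell (d * k)
  · rw [padicValNat_pell_mul hd hk (h p hp hpd)]
  · rw [padicValNat.eq_zero_of_not_dvd hpd]
    exact Nat.zero_le _

theorem pell_mult_independent_general
    (P : ℕ → ℕ) (h0 : P 0 = 0) (h1 : P 1 = 1)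
    (hrec : ∀ n, P (n + 2) = 2 * P (n + 1) + P n)
    (n m x y : ℕ) (hnm : m < n) (hm : 2 ≤ m) (hn : 3 ≤ n)
    (hx : 1 ≤ x) :
    P n ^ x ≠ P m ^ y := by
  obtain rfl := eq_pell h0 h1 hrec
  intro h
  obtain ⟨k, hk⟩ := Nat.gcd_dvd_left n m
  set d := Nat.gcd n m
  have hd : d ≠ 0 := Nat.gcd_ne_zero_right (by omega)
  have hdm : d ≤ m := Nat.gcd_le_right n (by omega)
  have hk2 : 2 ≤ k := by
    by_contra! hk2
    interval_cases k <;> omega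
  have hprime_dvd : ∀ p, p.Prime → p ∣ pell (d * k) → p ∣ pell d := fun p hp hpn ↦ by
    rw [← hk] at hpn
    have hpm : p ∣ pell m := hp.dvd_of_dvd_pow (h ▸ dvd_pow hpn (by omega))
    rw [pell_gcd]
    exact Nat.dvd_gcd hpn hpm
  have hdvd := pell_mul_dvd_of_forall_prime_dvd hd (by omega) hprime_dvd
  exact (pell_mul_lt_pell_mul hd hk2 (hk ▸ hn)).not_ge
    (Nat.le_of_dvd (Nat.mul_pos (pell_pos hd) (by omega)) hdvd)

/-- distinct classical Pell numbers with indices `n > m ≥ 2`, `n ≥ 3`,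
are multiplicatively independent. -/
theorem pell_mult_independent
    (P : ℕ → ℕ) (h0 : P 0 = 0) (h1 : P 1 = 1)
    (hrec : ∀ n, P (n + 2) = 2 * P (n + 1) + P n)
    (n m x y : ℕ) (hnm : m < n) (hm : 2 ≤ m) (hn : 3 ≤ n)
    (hx : 1 ≤ x) (hy : 1 ≤ y) :
    P n ^ x ≠ P m ^ y :=
  pell_mult_independent_general P h0 h1 hrec n m x y hnm hm hn hx
end
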